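/- The centered n-permutohedron is the Minkowski sum of segments: 𝔓 = Σ_{1≤i<j≤n+1} [−(e_i − e_j)/(2(n+1)), (e_i − e_j)/(2(n+1))], where [u, w] denotes the segment {(1−t)u + t·w : t ∈ [0,1]} and the sum of sets is the Minkowski sum A + B = {a + b : a ∈ A, b ∈ B}. -/

import Mathlib

open Finset Pointwise

noncomputable section

/-- The ambient Euclidean space `ℝ^{n+1}`. -/
abbrev Amb (n : ℕ) := EuclideanSpace ℝ (Fin (n + 1))

/-- The hyperplane `H₀ = {x ∈ ℝ^{n+1} : x_1 + ⋯ + x_{n+1} = 0}`. -/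
def H0 (n : ℕ) : Submodule ℝ (Amb n) where
  carrier := {x | ∑ i, x i = 0}
  add_mem' := by
    intro a b ha hb
    simp only [Set.mem_setOf_eq, PiLp.add_apply] at *
    simp [Finset.sum_add_distrib, ha, hb]
  zero_mem' := by
    simp only [Set.mem_setOf_eq, PiLp.zero_apply]
    simp
  smul_mem' := by
    intro c a ha
    simp only [Set.mem_setOf_eq, PiLp.smul_apply, smul_eq_mul] at *
    rw [← Finset.mul_sum, ha, mul_zero]

/-- `λ_i = e_i − 𝟙/(n+1) ∈ H₀`. -/
def lamb (n : ℕ) (i : Fin (n + 1)) : H0 n :=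
  ⟨(WithLp.toLp 2 (fun j => (if j = i then (1 : ℝ) else 0) - 1 / (n + 1)) : Amb n), by
    have h1 : (n : ℝ) + 1 ≠ 0 := by positivity
    show ∑ j, ((if j = i then (1 : ℝ) else 0) - 1 / (n + 1)) = 0
    rw [Finset.sum_sub_distrib]
    simp only [Finset.sum_ite_eq', Finset.mem_univ, if_true, Finset.sum_const,
      Finset.card_univ, Fintype.card_fin, nsmul_eq_mul]
    push_cast
    field_simp
    norm_num⟩

/-- The lattice `Λ ⊂ H₀` generated by `λ_1, …, λ_{n+1}`. -/
def latL (n : ℕ) : AddSubgroup (H0 n) := AddSubgroup.closure (Set.range (lamb n))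

/-- The coordinate permutation action of `Σ_{n+1}` on `H₀`. -/
def permAct (n : ℕ) (σ : Equiv.Perm (Fin (n + 1))) (x : H0 n) : H0 n :=
  ⟨(WithLp.toLp 2 (fun i => ((x : Amb n) (σ⁻¹ i) : ℝ)) : Amb n), by
    show ∑ i, (x : Amb n) (σ⁻¹ i) = 0
    rw [Equiv.sum_comp σ⁻¹ (fun i => (x : Amb n) i)]
    exact x.2⟩

/-- The center point `c ∈ H₀` with `c_a = (2a − n − 2)/(2(n+1))`, `a = 1, …, n+1`. -/
def ctr (n : ℕ) : H0 n :=
  ⟨(WithLp.toLp 2 (fun i : Fin (n + 1) => ((2 * (i : ℕ) - n) / (2 * (n + 1)) : ℝ)) : Amb n), by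
    show ∑ i : Fin (n + 1), ((2 * (i : ℕ) - (n : ℝ)) / (2 * (n + 1))) = 0
    rw [← Finset.sum_div]
    have h1 : ∑ i : Fin (n + 1), ((i : ℕ) : ℝ) = n * (n + 1) / 2 := by
      rw [Fin.sum_univ_eq_sum_range (fun i => (i : ℝ)) (n + 1)]
      have h2 := Finset.sum_range_id_mul_two (n + 1)
      have h3 : ((∑ i ∈ Finset.range (n + 1), i : ℕ) : ℝ) * 2 = (n + 1) * n := by
        exact_mod_cast congrArg (fun m : ℕ => (m : ℝ)) h2
      push_cast at h3 ⊢
      linarith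
    have h : ∑ i : Fin (n + 1), (2 * ((i : ℕ) : ℝ) - (n : ℝ)) = 0 := by
      rw [Finset.sum_sub_distrib, ← Finset.mul_sum, h1]
      simp [Finset.card_univ]
      ring
    rw [h, zero_div]⟩

/-- The centered `n`-permutohedron `𝔓 = conv {σ·c : σ ∈ Σ_{n+1}} ⊂ H₀`. -/
def Perm (n : ℕ) : Set (H0 n) :=
  convexHull ℝ {x | ∃ σ : Equiv.Perm (Fin (n + 1)), x = permAct n σ (ctr n)}

/-- The tile `𝔓 + μ` of the permutohedral tiling. -/
def tile (n : ℕ) (μ : H0 n) : Set (H0 n) := (fun x => μ + x) '' Perm n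

/-- `F` is a face of `Q`: the set of points of `Q` where some linear functional `ℓ`
attains its maximum over `Q`. -/
def IsFace {E : Type*} [AddCommGroup E] [Module ℝ E] (Q F : Set E) : Prop :=
  ∃ ℓ : E →ₗ[ℝ] ℝ, F = {x ∈ Q | ∀ y ∈ Q, ℓ y ≤ ℓ x}

/-- The dimension of a face: the dimension of its affine span. -/
def faceDim {E : Type*} [AddCommGroup E] [Module ℝ E] (F : Set E) : ℕ :=
  Module.finrank ℝ (affineSpan ℝ F).direction

/-- A vertex of `Q` is a point lying in a 0-dimensional face of `Q`. -/
def IsVertex {E : Type*} [AddCommGroup E] [Module ℝ E] (Q : Set E) (x : E) : Prop :=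
  ∃ F : Set E, IsFace Q F ∧ faceDim F = 0 ∧ x ∈ F

/-- The segment `[−(e_i − e_j)/(2(n+1)), (e_i − e_j)/(2(n+1))] ⊂ H₀`
(note `e_i − e_j = λ_i − λ_j`). -/
def segIJ (n : ℕ) (i j : Fin (n + 1)) : Set (H0 n) :=
  segment ℝ (-((1 / (2 * ((n : ℝ) + 1))) • (lamb n i - lamb n j)))
    ((1 / (2 * ((n : ℝ) + 1))) • (lamb n i - lamb n j))

section Aux

lemma card_filter_perm_lt {m : ℕ} (r : Equiv.Perm (Fin m)) (i : Fin m) :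
    (Finset.univ.filter fun j => r j < r i).card = (r i : ℕ) := by
  have h : (Finset.univ.filter fun j => r j < r i) = (Finset.Iio (r i)).image r.symm := by
    ext j
    simp only [Finset.mem_filter, Finset.mem_univ, true_and, Finset.mem_image, Finset.mem_Iio]
    constructor
    · intro h; exact ⟨r j, h, r.symm_apply_apply j⟩
    · rintro ⟨k, hk, rfl⟩; simpa using hk
  rw [h, Finset.card_image_of_injective _ r.symm.injective, Fin.card_Iio]

lemma card_filter_perm_gt {m : ℕ} (r : Equiv.Perm (Fin (m + 1))) (i : Fin (m + 1)) :
    (Finset.univ.filter fun j => r i < r j).card = m - (r i : ℕ) := by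
  have h : (Finset.univ.filter fun j => r i < r j) = (Finset.Ioi (r i)).image r.symm := by
    ext j
    simp only [Finset.mem_filter, Finset.mem_univ, true_and, Finset.mem_image, Finset.mem_Ioi]
    constructor
    · intro h; exact ⟨r j, h, r.symm_apply_apply j⟩
    · rintro ⟨k, hk, rfl⟩; simpa using hk
  rw [h, Finset.card_image_of_injective _ r.symm.injective, Fin.card_Ioi]
  omega

lemma sum_coeff {m : ℕ} (r : Equiv.Perm (Fin (m + 1))) (i : Fin (m + 1)) :
    ∑ j, (((if r j < r i then (1:ℝ) else 0) - (if r i < r j then (1:ℝ) else 0)))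
      = 2 * ((r i : ℕ) : ℝ) - m := by
  rw [Finset.sum_sub_distrib]
  rw [Finset.sum_boole, Finset.sum_boole, card_filter_perm_lt, card_filter_perm_gt]
  have hle : (r i : ℕ) ≤ m := Nat.lt_succ_iff.mp (r i).isLt
  have : ((m - (r i : ℕ) : ℕ) : ℝ) = (m : ℝ) - ((r i : ℕ) : ℝ) := by
    push_cast [Nat.cast_sub hle]; ring
  rw [this]; ring

lemma pair_sum_eq (n : ℕ) (r : Equiv.Perm (Fin (n + 1))) (y : Fin (n + 1) → ℝ) :
    (∑ p ∈ Finset.univ.filter (fun p : Fin (n + 1) × Fin (n + 1) => p.1 < p.2),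
      (if r p.2 < r p.1 then y p.1 - y p.2 else y p.2 - y p.1))
    = ∑ i, (2 * ((r i : ℕ) : ℝ) - n) * y i := by
  classical
  set a : Fin (n + 1) → Fin (n + 1) → ℝ :=
    fun i j => (if r j < r i then (1:ℝ) else 0) - (if r i < r j then (1:ℝ) else 0) with ha
  have haa : ∀ i, a i i = 0 := fun i => by simp [ha]
  have hanti : ∀ i j, a j i = - a i j := fun i j => by simp only [ha]; ring
  have hne : ∀ i j : Fin (n + 1), i ≠ j → a i j = if r j < r i then (1:ℝ) else -1 := by
    intro i j hij
    have hrne : r i ≠ r j := fun h => hij (r.injective h)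
    rcases lt_or_gt_of_ne hrne with h | h
    · simp [ha, h, asymm h]
    · simp [ha, h, asymm h]
  set g : Fin (n + 1) × Fin (n + 1) → ℝ := fun p => a p.1 p.2 * y p.1 with hg
  have stepA : ∑ p ∈ (univ ×ˢ univ : Finset (Fin (n + 1) × Fin (n + 1))), g p
      = ∑ i, (2 * ((r i : ℕ) : ℝ) - n) * y i := by
    rw [Finset.sum_product]
    refine Finset.sum_congr rfl fun i _ => ?_
    have : ∑ j, g (i, j) = (∑ j, a i j) * y i := by
      rw [Finset.sum_mul]
    rw [this, sum_coeff r i]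
  have huniv : (univ ×ˢ univ : Finset (Fin (n + 1) × Fin (n + 1))) = univ := by
    simp [Finset.univ_product_univ]
  have hsplit : ∑ p ∈ (univ ×ˢ univ : Finset (Fin (n + 1) × Fin (n + 1))), g p
      = (∑ p ∈ univ.filter (fun p : Fin (n + 1) × Fin (n + 1) => p.1 < p.2), g p)
      + (∑ p ∈ univ.filter (fun p : Fin (n + 1) × Fin (n + 1) => p.2 < p.1), g p) := by
    rw [huniv, ← Finset.sum_filter_add_sum_filter_not univ
      (fun p : Fin (n + 1) × Fin (n + 1) => p.1 < p.2) g]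
    congr 1
    rw [← Finset.sum_filter_add_sum_filter_not
      (univ.filter (fun p : Fin (n + 1) × Fin (n + 1) => ¬ p.1 < p.2)) (fun p => p.2 < p.1) g]
    have h1 : (univ.filter (fun p : Fin (n + 1) × Fin (n + 1) => ¬ p.1 < p.2)).filter
        (fun p => p.2 < p.1) = univ.filter (fun p : Fin (n + 1) × Fin (n + 1) => p.2 < p.1) := by
      ext p
      simp only [Finset.mem_filter, Finset.mem_univ, true_and]
      exact ⟨fun h => h.2, fun h => ⟨asymm h, h⟩⟩
    have h2 : ∑ p ∈ ((univ.filter (fun p : Fin (n + 1) × Fin (n + 1) => ¬ p.1 < p.2)).filter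
        (fun p => ¬ p.2 < p.1)), g p = 0 := by
      apply Finset.sum_eq_zero
      intro p hp
      simp only [Finset.mem_filter, Finset.mem_univ, true_and] at hp
      have : p.1 = p.2 := le_antisymm (not_lt.mp hp.2) (not_lt.mp hp.1)
      simp [hg, ← this, haa]
    rw [h1, h2, add_zero]
  have hswap : ∑ p ∈ univ.filter (fun p : Fin (n + 1) × Fin (n + 1) => p.2 < p.1), g p
      = ∑ p ∈ univ.filter (fun p : Fin (n + 1) × Fin (n + 1) => p.1 < p.2), g p.swap := by
    apply Finset.sum_nbij' (i := Prod.swap) (j := Prod.swap)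
    · intro p hp; simp only [Finset.mem_filter, Finset.mem_univ, true_and] at *; exact hp
    · intro p hp; simp only [Finset.mem_filter, Finset.mem_univ, true_and] at *; exact hp
    · intro p _; simp
    · intro p _; simp
    · intro p _; rfl
  rw [← stepA, hsplit, hswap, ← Finset.sum_add_distrib]
  refine Finset.sum_congr rfl fun p hp => ?_
  simp only [Finset.mem_filter, Finset.mem_univ, true_and] at hp
  have hne' : p.1 ≠ p.2 := ne_of_lt hp
  have h1 : g p + g p.swap = a p.1 p.2 * (y p.1 - y p.2) := by
    simp only [hg, Prod.fst_swap, Prod.snd_swap, hanti p.1 p.2]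
    ring
  rw [hne p.1 p.2 hne'] at h1
  by_cases h : r p.2 < r p.1
  · rw [if_pos h, h1, if_pos h]; ring
  · rw [if_neg h, h1, if_neg h]; ring

lemma lamb_apply (n : ℕ) (i a : Fin (n + 1)) :
    (lamb n i : Amb n) a = (if a = i then (1 : ℝ) else 0) - 1 / (n + 1) := rfl

lemma H0_eq_sum (n : ℕ) (x : H0 n) : x = ∑ i, ((x : Amb n) i) • lamb n i := by
  have hx : ∑ i, (x : Amb n) i = 0 := x.2
  apply Subtype.ext
  have hcoe : ((∑ i, ((x : Amb n) i) • lamb n i : H0 n) : Amb n)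
      = ∑ i, ((x : Amb n) i) • (lamb n i : Amb n) := by
    push_cast
    rfl
  rw [hcoe]
  ext a
  have happ : (∑ i, ((x : Amb n) i) • (lamb n i : Amb n)) a
      = ∑ i, ((x : Amb n) i) * ((lamb n i : Amb n) a) := by
    rw [WithLp.ofLp_sum, Finset.sum_apply]
    simp [PiLp.smul_apply, smul_eq_mul]
  rw [happ]
  have : ∀ i, ((x : Amb n) i) * ((lamb n i : Amb n) a)
      = ((x : Amb n) i) * (if a = i then (1:ℝ) else 0) - ((x : Amb n) i) * (1 / (n + 1)) := by
    intro i; rw [lamb_apply]; ring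
  simp only [this]
  rw [Finset.sum_sub_distrib, ← Finset.sum_mul, hx]
  simp [mul_ite]

lemma lin_eval (n : ℕ) (f : H0 n →ₗ[ℝ] ℝ) (x : H0 n) :
    f x = ∑ i, ((x : Amb n) i) * f (lamb n i) := by
  conv_lhs => rw [H0_eq_sum n x]
  rw [map_sum]
  simp [smul_eq_mul]

lemma exists_sorting (n : ℕ) (y : Fin (n + 1) → ℝ) :
    ∃ r : Equiv.Perm (Fin (n + 1)), ∀ i j, r i < r j → y i ≤ y j := by
  refine ⟨(Tuple.sort y)⁻¹, fun i j h => ?_⟩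
  have := Tuple.monotone_sort y (le_of_lt h)
  simpa using this

lemma ctr_apply (n : ℕ) (i : Fin (n + 1)) :
    (ctr n : Amb n) i = (2 * ((i : ℕ) : ℝ) - n) / (2 * ((n : ℝ) + 1)) := rfl

lemma permAct_apply (n : ℕ) (σ : Equiv.Perm (Fin (n + 1))) (x : H0 n) (i : Fin (n + 1)) :
    (permAct n σ x : Amb n) i = (x : Amb n) (σ⁻¹ i) := rfl

lemma vertex_eq (n : ℕ) (σ : Equiv.Perm (Fin (n + 1))) :
    (∑ p ∈ Finset.univ.filter (fun p : Fin (n + 1) × Fin (n + 1) => p.1 < p.2),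
      (if σ⁻¹ p.2 < σ⁻¹ p.1 then (1:ℝ) else -1) •
        ((1 / (2 * ((n : ℝ) + 1))) • (lamb n p.1 - lamb n p.2)))
      = permAct n σ (ctr n) := by
  classical
  apply Subtype.ext
  have hcoe : ((∑ p ∈ Finset.univ.filter (fun p : Fin (n + 1) × Fin (n + 1) => p.1 < p.2),
      (if σ⁻¹ p.2 < σ⁻¹ p.1 then (1:ℝ) else -1) •
        ((1 / (2 * ((n : ℝ) + 1))) • (lamb n p.1 - lamb n p.2)) : H0 n) : Amb n)
      = ∑ p ∈ Finset.univ.filter (fun p : Fin (n + 1) × Fin (n + 1) => p.1 < p.2),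
      (if σ⁻¹ p.2 < σ⁻¹ p.1 then (1:ℝ) else -1) •
        ((1 / (2 * ((n : ℝ) + 1))) • ((lamb n p.1 : Amb n) - (lamb n p.2 : Amb n))) := by
    push_cast
    rfl
  rw [hcoe]
  ext a
  rw [WithLp.ofLp_sum, Finset.sum_apply]
  have hterm : ∀ p ∈ Finset.univ.filter (fun p : Fin (n + 1) × Fin (n + 1) => p.1 < p.2),
      ((if σ⁻¹ p.2 < σ⁻¹ p.1 then (1:ℝ) else -1) •
        ((1 / (2 * ((n : ℝ) + 1))) • ((lamb n p.1 : Amb n) - (lamb n p.2 : Amb n)))) a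
      = (1 / (2 * ((n : ℝ) + 1))) *
        (if σ⁻¹ p.2 < σ⁻¹ p.1
          then (if a = p.1 then (1:ℝ) else 0) - (if a = p.2 then (1:ℝ) else 0)
          else (if a = p.2 then (1:ℝ) else 0) - (if a = p.1 then (1:ℝ) else 0)) := by
    intro p _
    have hsub : ((lamb n p.1 : Amb n) - (lamb n p.2 : Amb n)) a
        = (if a = p.1 then (1:ℝ) else 0) - (if a = p.2 then (1:ℝ) else 0) := by
      show (lamb n p.1 : Amb n) a - (lamb n p.2 : Amb n) a = _
      rw [lamb_apply, lamb_apply]; ring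
    show (if σ⁻¹ p.2 < σ⁻¹ p.1 then (1:ℝ) else -1) *
        ((1 / (2 * ((n : ℝ) + 1))) * (((lamb n p.1 : Amb n) - (lamb n p.2 : Amb n)) a)) = _
    rw [hsub]
    by_cases h : σ⁻¹ p.2 < σ⁻¹ p.1
    · rw [if_pos h, if_pos h]; ring
    · rw [if_neg h, if_neg h]; ring
  rw [Finset.sum_congr rfl hterm, ← Finset.mul_sum,
    pair_sum_eq n σ⁻¹ (fun i => if a = i then (1:ℝ) else 0)]
  have hsum : ∑ i, (2 * (((σ⁻¹ : Equiv.Perm (Fin (n+1))) i : ℕ) : ℝ) - n) *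
      (if a = i then (1:ℝ) else 0)
      = 2 * (((σ⁻¹ : Equiv.Perm (Fin (n+1))) a : ℕ) : ℝ) - n := by
    rw [Finset.sum_eq_single a]
    · simp
    · intro b _ hb; simp [Ne.symm hb]
    · intro h; exact absurd (Finset.mem_univ a) h
  rw [hsum, permAct_apply, ctr_apply]
  ring

end Aux

/-- The centered `n`-permutohedron is the Minkowski sum of the segments
`[−(e_i − e_j)/(2(n+1)), (e_i − e_j)/(2(n+1))]` over all pairs `1 ≤ i < j ≤ n+1`. -/
theorem statement5 (n : ℕ) (hn : 1 ≤ n) :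
    Perm n =
      ∑ p ∈ Finset.univ.filter (fun p : Fin (n + 1) × Fin (n + 1) => p.1 < p.2),
        segIJ n p.1 p.2 := by
  classical
  apply Set.Subset.antisymm
  · apply convexHull_min
    · rintro x ⟨σ, rfl⟩
      rw [← vertex_eq n σ]
      apply Set.finset_sum_mem_finset_sum
      intro p hp
      by_cases h : σ⁻¹ p.2 < σ⁻¹ p.1
      · rw [if_pos h, one_smul]
        exact right_mem_segment ℝ _ _
      · rw [if_neg h, neg_one_smul]
        exact left_mem_segment ℝ _ _
    · exact convex_sum _ (fun p _ => convex_segment _ _)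
  · intro x hx
    by_contra hxP
    have hfin : ({x : H0 n | ∃ σ : Equiv.Perm (Fin (n + 1)), x = permAct n σ (ctr n)}).Finite := by
      have hset : {x : H0 n | ∃ σ : Equiv.Perm (Fin (n + 1)), x = permAct n σ (ctr n)}
          = Set.range (fun σ : Equiv.Perm (Fin (n + 1)) => permAct n σ (ctr n)) := by
        ext z
        simp only [Set.mem_setOf_eq, Set.mem_range]
        exact ⟨fun ⟨σ, h⟩ => ⟨σ, h.symm⟩, fun ⟨σ, h⟩ => ⟨σ, h.symm⟩⟩
      rw [hset]
      exact Set.finite_range _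
    have hclosed : IsClosed (Perm n) := hfin.isClosed_convexHull ℝ
    obtain ⟨f, u, hfu, hux⟩ :=
      geometric_hahn_banach_closed_point (convex_convexHull ℝ _) hclosed hxP
    set y : Fin (n + 1) → ℝ := fun i => f (lamb n i) with hy
    obtain ⟨r, hr⟩ := exists_sorting n y
    set z := permAct n r⁻¹ (ctr n) with hz
    have hzPerm : z ∈ Perm n := subset_convexHull ℝ _ ⟨r⁻¹, rfl⟩
    have hfz : f z = ∑ i, ((2 * ((r i : ℕ) : ℝ) - n) / (2 * ((n : ℝ) + 1))) * y i := by
      have h1 := lin_eval n (f : H0 n →ₗ[ℝ] ℝ) z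
      have h2 : ∀ i, ((z : Amb n) i) = (2 * ((r i : ℕ) : ℝ) - n) / (2 * ((n : ℝ) + 1)) := by
        intro i
        rw [hz, permAct_apply, inv_inv, ctr_apply]
      simp only [ContinuousLinearMap.coe_coe] at h1
      rw [h1]
      exact Finset.sum_congr rfl fun i _ => by rw [h2 i]
    rw [Set.mem_finset_sum] at hx
    obtain ⟨g, hgmem, hgx⟩ := hx
    set D : ℝ := 1 / (2 * ((n : ℝ) + 1)) with hD
    have hDpos : 0 < D := by
      rw [hD]; positivity
    set v : Fin (n + 1) × Fin (n + 1) → H0 n :=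
      fun p => D • (lamb n p.1 - lamb n p.2) with hv
    have hb : f x ≤ ∑ p ∈ Finset.univ.filter
        (fun p : Fin (n + 1) × Fin (n + 1) => p.1 < p.2), |f (v p)| := by
      rw [← hgx, map_sum]
      apply Finset.sum_le_sum
      intro p hp
      have hgp : g p ∈ segment ℝ (-(v p)) (v p) := hgmem hp
      obtain ⟨s, t, hs, ht, hst, heq⟩ := hgp
      have : f (g p) = (t - s) * f (v p) := by
        rw [← heq]
        simp only [map_add, map_smul, map_neg, smul_eq_mul]
        ring
      rw [this]
      calc (t - s) * f (v p) ≤ |(t - s) * f (v p)| := le_abs_self _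
        _ = |t - s| * |f (v p)| := abs_mul _ _
        _ ≤ 1 * |f (v p)| := by
            apply mul_le_mul_of_nonneg_right _ (abs_nonneg _)
            rw [abs_le]
            constructor <;> nlinarith
        _ = |f (v p)| := one_mul _
    have hident : ∑ p ∈ Finset.univ.filter
        (fun p : Fin (n + 1) × Fin (n + 1) => p.1 < p.2), |f (v p)| = f z := by
      have hterm : ∀ p ∈ Finset.univ.filter
          (fun p : Fin (n + 1) × Fin (n + 1) => p.1 < p.2),
          |f (v p)| = D * (if r p.2 < r p.1 then y p.1 - y p.2 else y p.2 - y p.1) := by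
        intro p hp
        simp only [Finset.mem_filter, Finset.mem_univ, true_and] at hp
        have hfv : f (v p) = D * (y p.1 - y p.2) := by
          rw [hv]
          simp only [map_smul, map_sub, smul_eq_mul, hy]
        rw [hfv, abs_mul, abs_of_pos hDpos]
        congr 1
        have hne' : r p.1 ≠ r p.2 := fun h => (ne_of_lt hp) (r.injective h)
        by_cases h : r p.2 < r p.1
        · rw [if_pos h]
          exact abs_of_nonneg (sub_nonneg.mpr (hr p.2 p.1 h))
        · rw [if_neg h]
          have h' : r p.1 < r p.2 := lt_of_le_of_ne (not_lt.mp h) hne'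
          rw [abs_sub_comm]
          exact abs_of_nonneg (sub_nonneg.mpr (hr p.1 p.2 h'))
      rw [Finset.sum_congr rfl hterm, ← Finset.mul_sum, pair_sum_eq n r y, hfz,
        Finset.mul_sum]
      refine Finset.sum_congr rfl fun i _ => ?_
      rw [hD]
      field_simp
    have h1 : f z < u := hfu z hzPerm
    have h2 : f x ≤ f z := le_of_le_of_eq hb hident
    linarith


end
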